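/- The honest device always satisfies the Bell-round winning condition: for all bits s^A, s^B, h^A, h^B, a, b ∈ {0,1}, let w = (X^{h^A}·Z^{h^B} ⊗ X^{h^A}·Z^{h^B}) · (I ⊗ H) · CZ · (|+_{s^A}⟩ ⊗ |+_{s^B}⟩) ∈ ℂ²⊗ℂ². Then: (i) the squared magnitude of ⟨e_a ⊗ e_b, w⟩ equals 1/2 if a ⊕ b = s^B and 0 otherwise; and (ii) the squared magnitude of ⟨H·e_a ⊗ H·e_b, w⟩ equals 1/2 if a ⊕ b = s^A and 0 otherwise (⊕ denoting XOR). In particular, these outcome distributions are independent of the correction bits h^A, h^B, and when both qubits are measured in the computational basis the outcomes satisfy a ⊕ b = s^B with probability 1, while in the Hadamard basis they satisfy a ⊕ b = s^A with probability 1. -/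

import Mathlib

/-!
The preparation `(1 ⊗ H) · CZ` maps `|+_s⟩ ⊗ |+_t⟩` to the Bell state
`φ^(s,t) = (Z^s X^t ⊗ I) · EPR`, whose amplitude at `(x, y)` is `(-1)^(s x) / √2` if
`y = x ⊕ t` and `0` otherwise. Applying the same Pauli correction `X^h Z^k` to both qubits moves
the support to itself and contributes the phases `(-1)^(k (x + h) + k (y + h)) = (-1)^(k t)`, so
it only multiplies `φ^(s,t)` by a global sign. Measured in the computational basis, `φ^(s,t)`
has amplitude `± 1/√2` at `(a, b)` iff `a ⊕ b = t`; in the Hadamard basis the amplitude is a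
multiple of the character sum `∑ₓ (-1)^((a + b + s) x)`, which vanishes unless `a ⊕ b = s`.
-/

open Matrix Kronecker

noncomputable section

/-- Standard basis of ℂ². -/
def e (i : Fin 2) : Fin 2 → ℂ := fun j => if j = i then 1 else 0

/-- Kronecker (tensor) product of two vectors in ℂ². -/
def tens (v w : Fin 2 → ℂ) : Fin 2 × Fin 2 → ℂ := fun p => v p.1 * w p.2

/-- Pauli X. -/
def X : Matrix (Fin 2) (Fin 2) ℂ := !![0, 1; 1, 0]

/-- Pauli Z. -/
def Z : Matrix (Fin 2) (Fin 2) ℂ := !![1, 0; 0, -1]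

/-- Hadamard gate. -/
def Hgate : Matrix (Fin 2) (Fin 2) ℂ := (Real.sqrt 2 : ℂ)⁻¹ • !![1, 1; 1, -1]

/-- Controlled-Z gate: diag(1,1,1,-1). -/
def CZ : Matrix (Fin 2 × Fin 2) (Fin 2 × Fin 2) ℂ :=
  Matrix.diagonal fun p => (-1 : ℂ) ^ ((p.1 : ℕ) * (p.2 : ℕ))

/-- The EPR pair (e₀⊗e₀ + e₁⊗e₁)/√2. -/
def EPR : Fin 2 × Fin 2 → ℂ := (Real.sqrt 2 : ℂ)⁻¹ • (tens (e 0) (e 0) + tens (e 1) (e 1))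

/-- The Bell state φ^(s,t) = (Z^s X^t ⊗ I) EPR. -/
def bell (s t : Fin 2) : Fin 2 × Fin 2 → ℂ :=
  ((Z ^ (s : ℕ) * X ^ (t : ℕ)) ⊗ₖ (1 : Matrix (Fin 2) (Fin 2) ℂ)).mulVec EPR

/-- Hadamard-basis state |+_s⟩. -/
def plus (s : Fin 2) : Fin 2 → ℂ :=
  (Real.sqrt 2 : ℂ)⁻¹ • (e 0 + ((-1 : ℂ) ^ (s : ℕ)) • e 1)

-- Writing signs as the additive character `x ↦ (-1)^x` of `Fin 2` turns phase bookkeeping into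
-- arithmetic in `Fin 2`.
def sgn (x : Fin 2) : ℂ := (-1) ^ (x : ℕ)

local notation "κ" => ((Real.sqrt 2 : ℝ) : ℂ)⁻¹

lemma sgn_add (x y : Fin 2) : sgn (x + y) = sgn x * sgn y := by
  fin_cases x <;> fin_cases y <;> simp [sgn]

lemma sgn_sq (x : Fin 2) : sgn x ^ 2 = 1 := by
  rw [sq, ← sgn_add]; fin_cases x <;> simp [sgn]

lemma neg_one_pow_val_mul_val (x y : Fin 2) : (-1 : ℂ) ^ ((x : ℕ) * (y : ℕ)) = sgn (x * y) := by
  fin_cases x <;> fin_cases y <;> simp [sgn]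

lemma star_sgn (x : Fin 2) : star (sgn x) = sgn x := by
  fin_cases x <;> simp [sgn]

lemma norm_sgn (x : Fin 2) : ‖sgn x‖ = 1 := by
  simp [sgn]

lemma sum_sgn_mul (c : Fin 2) : ∑ x, sgn (c * x) = if c = 0 then 2 else 0 := by
  fin_cases c <;> norm_num [sgn, Fin.sum_univ_two]

lemma invSqrtTwo_mul_self : κ * κ = 2⁻¹ := by
  rw [← mul_inv, ← Complex.ofReal_mul, Real.mul_self_sqrt zero_le_two]; norm_num

lemma star_invSqrtTwo : star κ = κ := by
  simp

lemma invSqrtTwo_pow_three_mul_two : κ ^ 3 * 2 = κ := by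
  rw [pow_succ', mul_assoc, sq, invSqrtTwo_mul_self]; norm_num

lemma e_eq_single (a : Fin 2) : e a = Pi.single a 1 := by
  ext x; simp [e, Pi.single_apply]

lemma mulVec_e {m : Type*} (M : Matrix m (Fin 2) ℂ) (a : Fin 2) : M *ᵥ e a = fun x => M x a := by
  rw [e_eq_single, mulVec_single_one]; rfl

lemma kronecker_mulVec_apply {l m n o R : Type*} [Fintype m] [Fintype o] [NonUnitalSemiring R]
    (A : Matrix l m R) (B : Matrix n o R) (v : m × o → R) (p : l × n) :
    ((A ⊗ₖ B) *ᵥ v) p = (A *ᵥ fun x => (B *ᵥ fun y => v (x, y)) p.2) p.1 := by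
  simp [mulVec, dotProduct, Fintype.sum_prod_type, Finset.mul_sum, mul_assoc]

lemma X_pow_mulVec (h : Fin 2) (u : Fin 2 → ℂ) (x : Fin 2) :
    (X ^ (h : ℕ) *ᵥ u) x = u (x + h) := by
  fin_cases h <;> fin_cases x <;> simp [X, mulVec, dotProduct, Fin.sum_univ_two]

lemma Z_pow_mulVec (k : Fin 2) (u : Fin 2 → ℂ) (x : Fin 2) :
    (Z ^ (k : ℕ) *ᵥ u) x = sgn (k * x) * u x := by
  fin_cases k <;> fin_cases x <;> simp [Z, sgn, mulVec, dotProduct, Fin.sum_univ_two]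

lemma Hgate_apply (x y : Fin 2) : Hgate x y = κ * sgn (x * y) := by
  fin_cases x <;> fin_cases y <;> simp [Hgate, sgn]

lemma plus_apply (s x : Fin 2) : plus s x = κ * sgn (s * x) := by
  fin_cases s <;> fin_cases x <;> simp [plus, e, sgn]

lemma EPR_apply (p : Fin 2 × Fin 2) : EPR p = κ * if p.2 = p.1 then 1 else 0 := by
  obtain ⟨x, y⟩ := p
  fin_cases x <;> fin_cases y <;> simp [EPR, tens, e]

lemma CZ_mulVec (v : Fin 2 × Fin 2 → ℂ) (p : Fin 2 × Fin 2) :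
    (CZ *ᵥ v) p = sgn (p.1 * p.2) * v p := by
  rw [CZ, mulVec_diagonal, neg_one_pow_val_mul_val]

lemma bell_apply (s t : Fin 2) (p : Fin 2 × Fin 2) :
    bell s t p = κ * sgn (s * p.1) * if p.2 = p.1 + t then 1 else 0 := by
  rw [bell, kronecker_mulVec_apply, ← mulVec_mulVec, Z_pow_mulVec, X_pow_mulVec, one_mulVec,
    EPR_apply]
  ring

lemma Hgate_CZ_plus_eq_bell (s t : Fin 2) :
    (1 ⊗ₖ Hgate) *ᵥ (CZ *ᵥ tens (plus s) (plus t)) = bell s t := by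
  ext ⟨x, y⟩
  have support : y + x + t = 0 ↔ y = x + t := by revert x y t; decide
  have summand (y' : Fin 2) : Hgate y y' * (CZ *ᵥ tens (plus s) (plus t)) (x, y') =
      κ ^ 3 * sgn (s * x) * sgn ((y + x + t) * y') := by
    simp only [Hgate_apply, CZ_mulVec, tens, plus_apply, add_mul, sgn_add]
    ring
  rw [kronecker_mulVec_apply, one_mulVec, bell_apply, mulVec, dotProduct]
  simp only [summand, ← Finset.mul_sum, sum_sgn_mul, support]
  split_ifs
  · linear_combination sgn (s * x) * invSqrtTwo_pow_three_mul_two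
  · simp

lemma pauli_mulVec (h k : Fin 2) (u : Fin 2 → ℂ) (x : Fin 2) :
    ((X ^ (h : ℕ) * Z ^ (k : ℕ)) *ᵥ u) x = sgn (k * (x + h)) * u (x + h) := by
  rw [← mulVec_mulVec, X_pow_mulVec, Z_pow_mulVec]

lemma pauli_kronecker_mulVec_bell (s t h k : Fin 2) :
    ((X ^ (h : ℕ) * Z ^ (k : ℕ)) ⊗ₖ (X ^ (h : ℕ) * Z ^ (k : ℕ))) *ᵥ bell s t =
      (sgn (s * h) * sgn (k * t)) • bell s t := by
  ext ⟨x, y⟩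
  simp only [kronecker_mulVec_apply, pauli_mulVec, bell_apply, Pi.smul_apply, smul_eq_mul]
  by_cases hy : y = x + t
  · subst hy
    simp only [add_right_comm x t h, if_true, mul_add, sgn_add]
    ring_nf
    rw [sgn_sq, sgn_sq]
    ring
  · have : y + h ≠ x + h + t := by rwa [add_right_comm, Ne, add_left_inj]
    simp [hy, this]

lemma star_tens_e_dotProduct (a b : Fin 2) (v : Fin 2 × Fin 2 → ℂ) :
    star (tens (e a) (e b)) ⬝ᵥ v = v (a, b) := by
  have : tens (e a) (e b) = Pi.single (a, b) 1 := by
    ext ⟨x, y⟩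
    simp only [tens, e, Pi.single_apply, Prod.mk.injEq, ite_zero_mul_ite_zero, mul_one]
  rw [this, ← Pi.single_star, star_one, single_one_dotProduct]

lemma star_tens_e_dotProduct_bell (a b s t : Fin 2) :
    star (tens (e a) (e b)) ⬝ᵥ bell s t = κ * sgn (s * a) * if a + b = t then 1 else 0 := by
  have : b = a + t ↔ a + b = t := by revert a b t; decide
  rw [star_tens_e_dotProduct, bell_apply]
  simp only [this]

lemma star_tens_Hgate_e_dotProduct_bell (a b s t : Fin 2) :
    star (tens (Hgate *ᵥ e a) (Hgate *ᵥ e b)) ⬝ᵥ bell s t =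
      κ * sgn (b * t) * if a + b = s then 1 else 0 := by
  have support : a + b + s = 0 ↔ a + b = s := by revert a b s; decide
  have summand (x : Fin 2) : ∑ y, star (tens (Hgate *ᵥ e a) (Hgate *ᵥ e b)) (x, y) * bell s t (x, y)
      = κ ^ 3 * sgn (b * t) * sgn ((a + b + s) * x) := by
    simp only [Pi.star_apply, tens, mulVec_e, Hgate_apply, bell_apply, star_mul', star_sgn,
      star_invSqrtTwo, mul_ite, mul_one, mul_zero, Finset.sum_ite_eq', Finset.mem_univ, if_true]
    simp only [mul_add, sgn_add, mul_comm]
    ring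
  rw [dotProduct, Fintype.sum_prod_type]
  simp only [summand, ← Finset.mul_sum, sum_sgn_mul, support]
  split_ifs
  · linear_combination sgn (b * t) * invSqrtTwo_pow_three_mul_two
  · simp

lemma norm_sq_sgn_mul_sgn_mul_bell_amplitude (x y z : Fin 2) (P : Prop) [Decidable P] :
    ‖sgn x * sgn y * (κ * sgn z * if P then 1 else 0)‖ ^ 2 = if P then 1 / 2 else 0 := by
  split_ifs <;> simp [norm_sgn]

/-- the honest device always satisfies the Bell-round winning
condition, independently of the teleportation correction bits. -/
theorem honest_device_wins_bell_round (sA sB hA hB a b : Fin 2) :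
    (‖star (tens (e a) (e b)) ⬝ᵥ
        (((X ^ (hA : ℕ) * Z ^ (hB : ℕ)) ⊗ₖ (X ^ (hA : ℕ) * Z ^ (hB : ℕ))).mulVec
          (((1 : Matrix (Fin 2) (Fin 2) ℂ) ⊗ₖ Hgate).mulVec
            (CZ.mulVec (tens (plus sA) (plus sB)))))‖ ^ 2 =
      if a + b = sB then (1 / 2 : ℝ) else 0) ∧
    (‖star (tens (Hgate.mulVec (e a)) (Hgate.mulVec (e b))) ⬝ᵥ
        (((X ^ (hA : ℕ) * Z ^ (hB : ℕ)) ⊗ₖ (X ^ (hA : ℕ) * Z ^ (hB : ℕ))).mulVec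
          (((1 : Matrix (Fin 2) (Fin 2) ℂ) ⊗ₖ Hgate).mulVec
            (CZ.mulVec (tens (plus sA) (plus sB)))))‖ ^ 2 =
      if a + b = sA then (1 / 2 : ℝ) else 0) := by
  simp only [Hgate_CZ_plus_eq_bell, pauli_kronecker_mulVec_bell, dotProduct_smul, smul_eq_mul,
    star_tens_e_dotProduct_bell, star_tens_Hgate_e_dotProduct_bell,
    norm_sq_sgn_mul_sgn_mul_bell_amplitude, and_self]
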